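/- arXiv:1212.6227 — 4 statements merged into one kernel-verified Lean document; each statement's English description precedes it below -/
import Mathlib

section
/- Let R be an algebraic Kähler curvature tensor on ℂⁿ with nonnegative holomorphic bisectional curvature, and let V, W ∈ ℂⁿ satisfy R(V, V̄, W, W̄) = 0. Then for every Z ∈ ℂⁿ one has R(V, Z̄, W, W̄) = 0 and R(V, V̄, W, Z̄) = 0. -/
/-!
For fixed `W`, the form `(V, Z) ↦ R(V, Z̄, W, W̄)` is Hermitian (reality condition) and positive
semidefinite (nonnegative bisectional curvature), so by Cauchy–Schwarz
`|R(V, Z̄, W, W̄)|² ≤ R(V, V̄, W, W̄) R(Z, Z̄, W, W̄) = 0`. The second identity is the first one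
for the tensor with its two index pairs exchanged, which has the same properties.
-/

open scoped ComplexOrder

/-- The quadrilinear form `R(V, W̄, X, Ȳ) = Σ R_{ij̄kl̄} V^i conj(W^j) X^k conj(Y^l)`
associated to an algebraic Kähler curvature tensor `R` on `ℂⁿ`. -/
noncomputable def kahlerQuad {n : ℕ} (R : Fin n → Fin n → Fin n → Fin n → ℂ)
    (V W X Y : Fin n → ℂ) : ℂ :=
  ∑ i, ∑ j, ∑ k, ∑ l,
    R i j k l * V i * (starRingEnd ℂ) (W j) * X k * (starRingEnd ℂ) (Y l)

theorem PreInnerProductSpace.Core.inner_eq_zero_of_inner_self_eq_zero {𝕜 F : Type*} [RCLike 𝕜]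
    [AddCommGroup F] [Module 𝕜 F] (c : PreInnerProductSpace.Core 𝕜 F) {x : F}
    (hx : c.inner x x = 0) (y : F) : c.inner y x = 0 := by
  have h := InnerProductSpace.Core.inner_mul_inner_self_le (c := c) x y
  rw [InnerProductSpace.Core.norm_inner_symm (c := c) x y, hx, map_zero, zero_mul] at h
  exact norm_eq_zero.mp (mul_self_eq_zero.mp (le_antisymm h (mul_self_nonneg _)))

section KahlerQuad

variable {n : ℕ} (R : Fin n → Fin n → Fin n → Fin n → ℂ)

theorem kahlerQuad_add_second (V W W' X Y : Fin n → ℂ) :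
    kahlerQuad R V (W + W') X Y = kahlerQuad R V W X Y + kahlerQuad R V W' X Y := by
  simp only [kahlerQuad, Pi.add_apply, map_add, mul_add, add_mul, Finset.sum_add_distrib]

theorem kahlerQuad_smul_second (c : ℂ) (V W X Y : Fin n → ℂ) :
    kahlerQuad R V (c • W) X Y = (starRingEnd ℂ) c * kahlerQuad R V W X Y := by
  simp only [kahlerQuad, Pi.smul_apply, smul_eq_mul, map_mul, Finset.mul_sum]
  congr! 4 with i - j - k - l -
  ring

theorem conj_kahlerQuad (hreal : ∀ i j k l, R i j k l = (starRingEnd ℂ) (R j i l k))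
    (V W X Y : Fin n → ℂ) :
    (starRingEnd ℂ) (kahlerQuad R V W X Y) = kahlerQuad R W V Y X := by
  rw [kahlerQuad, kahlerQuad, Finset.sum_comm]
  simp only [map_sum]
  congr! 2 with j - i -
  rw [Finset.sum_comm]
  congr! 2 with l - k -
  rw [hreal j i l k]
  simp only [map_mul, Complex.conj_conj]
  ring

def pairSwap : Fin n → Fin n → Fin n → Fin n → ℂ :=
  fun i j k l => R k l i j

theorem kahlerQuad_pairSwap (V W X Y : Fin n → ℂ) :
    kahlerQuad (pairSwap R) X Y V W = kahlerQuad R V W X Y := by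
  simp only [kahlerQuad, pairSwap, ← Fintype.sum_prod_type']
  refine Fintype.sum_equiv ⟨fun p => (p.2.2.1, p.2.2.2, p.1, p.2.1),
    fun p => (p.2.2.1, p.2.2.2, p.1, p.2.1), fun _ => rfl, fun _ => rfl⟩ _ _ fun _ => ?_
  simp only [Equiv.coe_fn_mk]
  ring

/-- `⟪Z, V⟫ := R(V, Z̄, X, X̄)`, with the arguments swapped because Mathlib's inner products are
conjugate-linear in the first argument. -/
@[reducible] noncomputable def kahlerQuadCore
    (hreal : ∀ i j k l, R i j k l = (starRingEnd ℂ) (R j i l k))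
    (hnonneg : ∀ V W : Fin n → ℂ, 0 ≤ kahlerQuad R V V W W) (X : Fin n → ℂ) :
    PreInnerProductSpace.Core ℂ (Fin n → ℂ) where
  inner W V := kahlerQuad R V W X X
  conj_inner_symm W V := conj_kahlerQuad R hreal W V X X
  re_inner_nonneg V := (Complex.nonneg_iff.mp (hnonneg V X)).1
  add_left W W' V := kahlerQuad_add_second R V W W' X X
  smul_left W V c := kahlerQuad_smul_second R c V W X X

theorem kahlerQuad_eq_zero_of_kahlerQuad_self_eq_zero
    (hreal : ∀ i j k l, R i j k l = (starRingEnd ℂ) (R j i l k))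
    (hnonneg : ∀ V W : Fin n → ℂ, 0 ≤ kahlerQuad R V V W W)
    {V W : Fin n → ℂ} (hVW : kahlerQuad R V V W W = 0) (Z : Fin n → ℂ) :
    kahlerQuad R V Z W W = 0 :=
  (kahlerQuadCore R hreal hnonneg W).inner_eq_zero_of_inner_self_eq_zero hVW Z

end KahlerQuad

theorem kahlerQuad_eq_zero_of_bisectional_zero_general
    {n : ℕ} (R : Fin n → Fin n → Fin n → Fin n → ℂ)
    (hreal : ∀ i j k l, R i j k l = (starRingEnd ℂ) (R j i l k))
    (hnonneg : ∀ V W : Fin n → ℂ, 0 ≤ kahlerQuad R V V W W)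
    (V W : Fin n → ℂ) (hVW : kahlerQuad R V V W W = 0) :
    ∀ Z : Fin n → ℂ, kahlerQuad R V Z W W = 0 ∧ kahlerQuad R V V W Z = 0 := by
  intro Z
  have hreal_swap : ∀ i j k l, pairSwap R i j k l = (starRingEnd ℂ) (pairSwap R j i l k) :=
    fun i j k l => hreal k l i j
  have hnonneg_swap : ∀ V W : Fin n → ℂ, 0 ≤ kahlerQuad (pairSwap R) V V W W :=
    fun V W => kahlerQuad_pairSwap R W W V V ▸ hnonneg W V
  refine ⟨kahlerQuad_eq_zero_of_kahlerQuad_self_eq_zero R hreal hnonneg hVW Z, ?_⟩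
  rw [← kahlerQuad_pairSwap]
  exact kahlerQuad_eq_zero_of_kahlerQuad_self_eq_zero (pairSwap R) hreal_swap hnonneg_swap
    ((kahlerQuad_pairSwap R V V W W).trans hVW) Z

/-- Let `R` be an algebraic Kähler curvature tensor on `ℂⁿ` with nonnegative
holomorphic bisectional curvature, and let `V, W ∈ ℂⁿ` satisfy `R(V, V̄, W, W̄) = 0`.
Then for every `Z ∈ ℂⁿ` one has `R(V, Z̄, W, W̄) = 0` and `R(V, V̄, W, Z̄) = 0`. -/
theorem kahlerQuad_eq_zero_of_bisectional_zero
    {n : ℕ} (R : Fin n → Fin n → Fin n → Fin n → ℂ)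
    (hsym1 : ∀ i j k l, R i j k l = R k j i l)
    (hsym2 : ∀ i j k l, R i j k l = R i l k j)
    (hreal : ∀ i j k l, R i j k l = (starRingEnd ℂ) (R j i l k))
    (hnonneg : ∀ V W : Fin n → ℂ, 0 ≤ kahlerQuad R V V W W)
    (V W : Fin n → ℂ) (hVW : kahlerQuad R V V W W = 0) :
    ∀ Z : Fin n → ℂ, kahlerQuad R V Z W W = 0 ∧ kahlerQuad R V V W Z = 0 :=
  kahlerQuad_eq_zero_of_bisectional_zero_general R hreal hnonneg V W hVW
end

section
/- Let R be an algebraic Kähler curvature tensor on ℂⁿ with nonnegative orthogonal bisectional curvature. Let E₁, E₂ ∈ ℂⁿ be unit vectors with ⟨E₁, E₂⟩ = 0 and suppose R(E₁, Ē₁, E₂, Ē₂) = 0. Then for every Z ∈ ℂⁿ with ⟨Z, E₁⟩ = 0 one has R(E₁, Ē₁, E₂, Z̄) = 0, and for every Z ∈ ℂⁿ with ⟨Z, E₂⟩ = 0 one has R(E₂, Ē₂, E₁, Z̄) = 0. -/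
/-
For fixed `E`, `(X, Y) ↦ R(E, Ē, X, Ȳ)` is a sesquilinear form that is positive semidefinite on
`E^⊥`, and `W ∈ E^⊥` with `R(E, Ē, W, W̄) = 0` is isotropic for it. As for any positive semidefinite
form, the `t`-linear part of `0 ≤ f(W + tZ, W + tZ)` must vanish, so `f(W, Z) = 0`. The second
claim is the first with `E₁` and `E₂` exchanged, using the pair symmetry `R_{ij̄kl̄} = R_{kl̄ij̄}`.
-/

open scoped ComplexOrder

/-- The standard Hermitian inner product `⟨V, W⟩ = Σ_i V^i conj(W^i)` on `ℂⁿ`. -/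
noncomputable def hermInner {n : ℕ} (V W : Fin n → ℂ) : ℂ :=
  ∑ i, V i * (starRingEnd ℂ) (W i)

open ComplexConjugate

theorem Complex.eq_zero_of_forall_nonneg_hermitian_quadratic {B C D : ℂ} (hC : 0 ≤ C)
    (h : ∀ t : ℂ, 0 ≤ t * D + conj t * B + t * conj t * C) : B = 0 := by
  -- `0 ≤ z` in `ComplexOrder` includes `z.im = 0`; at `t = 1` and `t = I` this gives `D = conj B`.
  have hD : D = conj B := by
    have h1 := (h 1).2
    have hI := (h I).2
    simp only [← hC.2, map_one, conj_I, one_mul, mul_one, neg_mul, mul_neg, I_mul_I, neg_neg,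
      add_im, neg_im, mul_im, I_re, I_im, zero_mul, zero_add, add_zero, zero_im] at h1 hI
    apply Complex.ext <;> simp <;> linarith
  have hquad : ∀ s : ℝ, 0 ≤ (normSq B * C.re) * (s * s) + 2 * normSq B * s + 0 := by
    intro s
    have := (h (s * B)).1
    simp only [hD, zero_re, map_mul, conj_ofReal, add_re, mul_re, ofReal_re, ofReal_im, conj_re,
      mul_im, conj_im, ← hC.2, zero_im, zero_mul, mul_zero, sub_zero, add_zero] at this
    rw [normSq_apply]
    nlinarith
  have hdiscr := discrim_le_zero hquad
  rw [discrim] at hdiscr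
  have : normSq B = 0 := by nlinarith [normSq_nonneg B]
  simpa using this

theorem LinearMap.apply_eq_zero_of_nonneg_of_apply_self_eq_zero {M : Type*} [AddCommGroup M]
    [Module ℂ M] (f : M →ₗ[ℂ] M →ₗ⋆[ℂ] ℂ) (p : Submodule ℂ M) (hf : ∀ x ∈ p, 0 ≤ f x x)
    {w z : M} (hw : w ∈ p) (hz : z ∈ p) (hww : f w w = 0) : f w z = 0 := by
  refine Complex.eq_zero_of_forall_nonneg_hermitian_quadratic (D := f z w) (hf z hz) fun t => ?_
  convert hf (w + t • z) (p.add_mem hw (p.smul_mem t hz)) using 1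
  simp [hww]
  ring

theorem hermInner_eq_zero_symm {n : ℕ} {V W : Fin n → ℂ} :
    hermInner V W = 0 ↔ hermInner W V = 0 := by
  have hconj : hermInner V W = conj (hermInner W V) := by
    simp [hermInner, mul_comm]
  rw [hconj, map_eq_zero]

noncomputable def hermOrthogonal {n : ℕ} (E : Fin n → ℂ) : Submodule ℂ (Fin n → ℂ) where
  carrier := {X | hermInner E X = 0}
  add_mem' hX hY := by
    simp_all [hermInner, mul_add, Finset.sum_add_distrib]
  zero_mem' := by simp [hermInner]
  smul_mem' c X hX := by
    simp_all [hermInner, mul_left_comm _ (conj c), ← Finset.mul_sum]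

noncomputable def kahlerForm {n : ℕ} (R : Fin n → Fin n → Fin n → Fin n → ℂ) (V : Fin n → ℂ) :
    (Fin n → ℂ) →ₗ[ℂ] (Fin n → ℂ) →ₗ⋆[ℂ] ℂ :=
  LinearMap.mk₂'ₛₗ _ _ (kahlerQuad R V V)
    (fun _ _ _ => by simp [kahlerQuad, mul_add, add_mul, Finset.sum_add_distrib])
    (fun _ _ _ => by simp [kahlerQuad, Finset.mul_sum, mul_left_comm, mul_assoc])
    (fun _ _ _ => by simp [kahlerQuad, mul_add, Finset.sum_add_distrib])
    (fun _ _ _ => by simp [kahlerQuad, Finset.mul_sum, mul_left_comm, mul_assoc])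

theorem kahlerQuad_comm {n : ℕ} {R : Fin n → Fin n → Fin n → Fin n → ℂ}
    (hR : ∀ i j k l, R i j k l = R k l i j) (V W X Y : Fin n → ℂ) :
    kahlerQuad R V W X Y = kahlerQuad R X Y V W := by
  unfold kahlerQuad
  rw [Finset.sum_comm_cycle]
  refine Finset.sum_congr rfl fun k _ => ?_
  rw [Finset.sum_comm_cycle]
  refine Finset.sum_congr rfl fun l _ => Finset.sum_congr rfl fun i _ =>
    Finset.sum_congr rfl fun j _ => ?_
  rw [hR]
  ring

theorem kahlerQuad_eq_zero_of_null {n : ℕ} {R : Fin n → Fin n → Fin n → Fin n → ℂ}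
    (hnonneg : ∀ V W : Fin n → ℂ, hermInner V W = 0 → 0 ≤ kahlerQuad R V V W W)
    {E W Z : Fin n → ℂ} (hW : hermInner E W = 0) (hZ : hermInner Z E = 0)
    (hWW : kahlerQuad R E E W W = 0) : kahlerQuad R E E W Z = 0 :=
  (kahlerForm R E).apply_eq_zero_of_nonneg_of_apply_self_eq_zero (hermOrthogonal E)
    (fun X hX => hnonneg E X hX) hW (hermInner_eq_zero_symm.1 hZ) hWW

theorem orthogonal_bisectional_null_claim_general
    {n : ℕ} (R : Fin n → Fin n → Fin n → Fin n → ℂ)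
    (hsym1 : ∀ i j k l, R i j k l = R k j i l)
    (hsym2 : ∀ i j k l, R i j k l = R i l k j)
    (hnonneg : ∀ V W : Fin n → ℂ, hermInner V W = 0 → 0 ≤ kahlerQuad R V V W W)
    (E₁ E₂ : Fin n → ℂ)
    (horth : hermInner E₁ E₂ = 0)
    (hzero : kahlerQuad R E₁ E₁ E₂ E₂ = 0) :
    (∀ Z : Fin n → ℂ, hermInner Z E₁ = 0 → kahlerQuad R E₁ E₁ E₂ Z = 0) ∧
    (∀ Z : Fin n → ℂ, hermInner Z E₂ = 0 → kahlerQuad R E₂ E₂ E₁ Z = 0) := by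
  have hpair : ∀ i j k l, R i j k l = R k l i j := fun i j k l => by rw [hsym1, hsym2 k]
  refine ⟨fun Z hZ => kahlerQuad_eq_zero_of_null hnonneg horth hZ hzero, fun Z hZ => ?_⟩
  refine kahlerQuad_eq_zero_of_null hnonneg (hermInner_eq_zero_symm.1 horth) hZ ?_
  rwa [kahlerQuad_comm hpair]

/-- Let `R` be an algebraic Kähler curvature tensor on `ℂⁿ` with nonnegative
orthogonal bisectional curvature.  Let `E₁, E₂ ∈ ℂⁿ` be unit vectors with `⟨E₁, E₂⟩ = 0` and
suppose `R(E₁, Ē₁, E₂, Ē₂) = 0`.  Then for every `Z ∈ ℂⁿ` with `⟨Z, E₁⟩ = 0` one has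
`R(E₁, Ē₁, E₂, Z̄) = 0`, and for every `Z ∈ ℂⁿ` with `⟨Z, E₂⟩ = 0` one has
`R(E₂, Ē₂, E₁, Z̄) = 0`. -/
theorem orthogonal_bisectional_null_claim
    {n : ℕ} (R : Fin n → Fin n → Fin n → Fin n → ℂ)
    (hsym1 : ∀ i j k l, R i j k l = R k j i l)
    (hsym2 : ∀ i j k l, R i j k l = R i l k j)
    (hreal : ∀ i j k l, R i j k l = (starRingEnd ℂ) (R j i l k))
    (hnonneg : ∀ V W : Fin n → ℂ, hermInner V W = 0 → 0 ≤ kahlerQuad R V V W W)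
    (E₁ E₂ : Fin n → ℂ)
    (hE₁ : hermInner E₁ E₁ = 1) (hE₂ : hermInner E₂ E₂ = 1)
    (horth : hermInner E₁ E₂ = 0)
    (hzero : kahlerQuad R E₁ E₁ E₂ E₂ = 0) :
    (∀ Z : Fin n → ℂ, hermInner Z E₁ = 0 → kahlerQuad R E₁ E₁ E₂ Z = 0) ∧
    (∀ Z : Fin n → ℂ, hermInner Z E₂ = 0 → kahlerQuad R E₂ E₂ E₁ Z = 0) :=
  orthogonal_bisectional_null_claim_general R hsym1 hsym2 hnonneg E₁ E₂ horth hzero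
end

section
/- Let n ≥ 2 and let R be an algebraic Kähler curvature tensor on ℂⁿ with nonnegative orthogonal bisectional curvature such that R_{11̄22̄} = 0 (indices refer to the standard orthonormal basis e₁,…,eₙ of ℂⁿ). Define G_{αβ̄γδ̄} = Σ_{μ,ν} ( R_{αβ̄μν̄} R_{νμ̄γδ̄} + R_{αδ̄μν̄} R_{νμ̄γβ̄} − R_{αμ̄γν̄} R_{μβ̄νδ̄} ), with μ, ν ranging over {1,…,n}. Then G_{11̄22̄} = Σ_{3 ≤ i,j ≤ n} R_{11̄ij̄} R_{jī22̄} − Σ_{3 ≤ i,j ≤ n} |R_{1ī2j̄}|² + Σ_{1 ≤ μ,ν ≤ n} |R_{12̄μν̄}|². -/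
open scoped ComplexOrder

/-- The quadratic expression
`G_{αβ̄γδ̄} = Σ_{μ,ν} (R_{αβ̄μν̄} R_{νμ̄γδ̄} + R_{αδ̄μν̄} R_{νμ̄γβ̄} − R_{αμ̄γν̄} R_{μβ̄νδ̄})`
from the evolution equation of the curvature tensor under the Kähler-Ricci flow. -/
noncomputable def GtenOBC {n : ℕ} (R : Fin n → Fin n → Fin n → Fin n → ℂ)
    (a b c d : Fin n) : ℂ :=
  ∑ μ, ∑ ν, (R a b μ ν * R ν μ c d + R a d μ ν * R ν μ c b - R a μ c ν * R μ b ν d)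


/-!
`R(e₁, ē₁, e₂, ē₂) = 0` is a minimum of the orthogonal bisectional curvature, so its first
variation along every curve of orthogonal pairs through `(e₁, e₂)` vanishes. Moving `e₁` towards
`e_μ`, `e₂` towards `e_ν`, and rotating `(e₁, e₂)` within its own plane gives
`R_{μ1̄22̄} = 0` (`μ ≠ 2`), `R_{11̄ν2̄} = 0` (`ν ≠ 1`) and `R_{21̄22̄} = R_{11̄21̄}`.
By the Kähler symmetries
`G_{11̄22̄} = Σ_{μ,ν} (R_{11̄μν̄} R_{νμ̄22̄} - |R_{1μ̄2ν̄}|²) + Σ_{μ,ν} |R_{12̄μν̄}|²`, and these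
identities kill every term of the first sum with `μ` or `ν` in `{1, 2}`: the mixed ones vanish
individually and the four with `μ, ν ∈ {1, 2}` cancel.
-/

namespace KahlerCurvature

open Finset Complex ComplexConjugate

variable {n : ℕ}

def HasNonnegOrthBisectional (R : Fin n → Fin n → Fin n → Fin n → ℂ) : Prop :=
  ∀ V W : Fin n → ℂ, hermInner V W = 0 → 0 ≤ kahlerQuad R V V W W

section Quad

variable (R : Fin n → Fin n → Fin n → Fin n → ℂ)

theorem kahlerQuad_single (p q r s : Fin n) (c₁ c₂ c₃ c₄ : ℂ) :
    kahlerQuad R (Pi.single p c₁) (Pi.single q c₂) (Pi.single r c₃) (Pi.single s c₄) =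
      R p q r s * c₁ * conj c₂ * c₃ * conj c₄ := by
  simp [kahlerQuad, Pi.single_apply, apply_ite (starRingEnd ℂ)]

theorem kahlerQuad_smul_first (c : ℂ) (V W X Y : Fin n → ℂ) :
    kahlerQuad R (c • V) W X Y = c * kahlerQuad R V W X Y := by
  simp only [kahlerQuad, Pi.smul_apply, smul_eq_mul, mul_sum]
  refine sum_congr rfl fun i _ => sum_congr rfl fun j _ =>
    sum_congr rfl fun k _ => sum_congr rfl fun l _ => by ring

theorem kahlerQuad_smul_third (c : ℂ) (V W X Y : Fin n → ℂ) :
    kahlerQuad R V W (c • X) Y = c * kahlerQuad R V W X Y := by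
  simp only [kahlerQuad, Pi.smul_apply, smul_eq_mul, mul_sum]
  refine sum_congr rfl fun i _ => sum_congr rfl fun j _ =>
    sum_congr rfl fun k _ => sum_congr rfl fun l _ => by ring

theorem conj_kahlerQuad (hreal : ∀ i j k l, R i j k l = conj (R j i l k))
    (V W X Y : Fin n → ℂ) : conj (kahlerQuad R V W X Y) = kahlerQuad R W V Y X := by
  simp only [kahlerQuad, map_sum, map_mul, conj_conj]
  rw [sum_comm]
  refine sum_congr rfl fun j _ => sum_congr rfl fun i _ => ?_
  rw [sum_comm]
  refine sum_congr rfl fun l _ => sum_congr rfl fun k _ => ?_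
  rw [← hreal j i l k]
  ring

theorem hasDerivAt_kahlerQuad_line (V W X Y V' W' X' Y' : Fin n → ℂ) :
    HasDerivAt (fun ε : ℝ => kahlerQuad R (V + (ε : ℂ) • V') (W + (ε : ℂ) • W')
        (X + (ε : ℂ) • X') (Y + (ε : ℂ) • Y'))
      (kahlerQuad R V' W X Y + kahlerQuad R V W' X Y + kahlerQuad R V W X' Y +
        kahlerQuad R V W X Y') 0 := by
  have hline : ∀ a b : ℂ, HasDerivAt (fun ε : ℝ => a + (ε : ℂ) * b) b 0 := fun a b => by
    simpa using ((hasDerivAt_id (0 : ℝ)).ofReal_comp.mul_const b).const_add a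
  have hterm : ∀ i j k l, HasDerivAt (fun ε : ℝ => R i j k l * (V i + ε * V' i) *
      (conj (W j) + ε * conj (W' j)) * (X k + ε * X' k) * (conj (Y l) + ε * conj (Y' l)))
      (R i j k l * V' i * conj (W j) * X k * conj (Y l) +
        R i j k l * V i * conj (W' j) * X k * conj (Y l) +
        R i j k l * V i * conj (W j) * X' k * conj (Y l) +
        R i j k l * V i * conj (W j) * X k * conj (Y' l)) 0 := fun i j k l => by
    refine (((((hline (V i) (V' i)).const_mul (R i j k l)).fun_mul
      (hline (conj (W j)) (conj (W' j)))).fun_mul (hline (X k) (X' k))).fun_mul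
      (hline (conj (Y l)) (conj (Y' l)))).congr_deriv ?_
    simp only [ofReal_zero, zero_mul, add_zero]
    ring
  have hsum : HasDerivAt (fun ε : ℝ => ∑ i, ∑ j, ∑ k, ∑ l, R i j k l * (V i + ε * V' i) *
      (conj (W j) + ε * conj (W' j)) * (X k + ε * X' k) * (conj (Y l) + ε * conj (Y' l)))
      (∑ i, ∑ j, ∑ k, ∑ l, (R i j k l * V' i * conj (W j) * X k * conj (Y l) +
        R i j k l * V i * conj (W' j) * X k * conj (Y l) +
        R i j k l * V i * conj (W j) * X' k * conj (Y l) +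
        R i j k l * V i * conj (W j) * X k * conj (Y' l))) 0 :=
    HasDerivAt.fun_sum fun i _ => HasDerivAt.fun_sum fun j _ =>
      HasDerivAt.fun_sum fun k _ => HasDerivAt.fun_sum fun l _ => hterm i j k l
  convert hsum using 1
  · funext ε
    simp [kahlerQuad, conj_ofReal]
  · simp only [kahlerQuad, ← sum_add_distrib]

end Quad

section Sums

variable {ι M : Type*} [Fintype ι] [DecidableEq ι] [AddCommMonoid M] {a b : ι}

theorem sum_univ_eq_add_add_sum_compl_pair (hab : a ≠ b) (f : ι → M) :
    ∑ i, f i = f a + f b + ∑ i ∈ {a, b}ᶜ, f i := by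
  rw [← sum_add_sum_compl {a, b}, sum_pair hab]

theorem sum_sum_eq_sum_sum_compl_pair_of_cross (hab : a ≠ b) (D : ι → ι → M)
    (hcross : ∀ i ∈ ({a, b} : Finset ι)ᶜ, D i a = 0 ∧ D i b = 0 ∧ D a i = 0 ∧ D b i = 0)
    (hcorner : D a a + D a b + (D b a + D b b) = 0) :
    ∑ i, ∑ j, D i j = ∑ i ∈ {a, b}ᶜ, ∑ j ∈ {a, b}ᶜ, D i j := by
  simp only [sum_univ_eq_add_add_sum_compl_pair hab, sum_add_distrib]
  rw [sum_eq_zero fun i hi => (hcross i hi).1, sum_eq_zero fun i hi => (hcross i hi).2.1,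
    sum_eq_zero fun i hi => (hcross i hi).2.2.1, sum_eq_zero fun i hi => (hcross i hi).2.2.2]
  simp only [add_zero, zero_add, hcorner]

end Sums

namespace HasNonnegOrthBisectional

variable {R : Fin n → Fin n → Fin n → Fin n → ℂ}

theorem re_firstVariation_eq_zero (hR : HasNonnegOrthBisectional R)
    (hreal : ∀ i j k l, R i j k l = conj (R j i l k)) {x y v w : Fin n → ℂ}
    (h0 : kahlerQuad R x x y y = 0)
    (horth : ∀ ε : ℝ, hermInner (x + (ε : ℂ) • v) (y + (ε : ℂ) • w) = 0) :
    (kahlerQuad R v x y y + kahlerQuad R x x w y).re = 0 := by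
  set f : ℝ → ℝ := fun ε => (kahlerQuad R (x + (ε : ℂ) • v) (x + (ε : ℂ) • v)
    (y + (ε : ℂ) • w) (y + (ε : ℂ) • w)).re
  have hmin : IsLocalMin f 0 := Filter.Eventually.of_forall fun ε => by
    simpa [f, h0] using (Complex.le_def.mp (hR _ _ (horth ε))).1
  have hderiv := hmin.hasDerivAt_eq_zero
    (reCLM.hasFDerivAt.comp_hasDerivAt 0 (hasDerivAt_kahlerQuad_line R x x y y v v w w))
  rw [← conj_kahlerQuad R hreal v x y y, ← conj_kahlerQuad R hreal x x w y] at hderiv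
  simp only [reCLM_apply, add_re, conj_re] at hderiv
  rw [add_re]
  linarith

theorem firstVariation_eq_zero (hR : HasNonnegOrthBisectional R)
    (hreal : ∀ i j k l, R i j k l = conj (R j i l k)) {x y v w : Fin n → ℂ}
    (h0 : kahlerQuad R x x y y = 0)
    (horth : ∀ ε : ℝ, hermInner (x + (ε : ℂ) • v) (y + (ε : ℂ) • w) = 0)
    (horth' : ∀ ε : ℝ, hermInner (x + (ε : ℂ) • I • v) (y + (ε : ℂ) • I • w) = 0) :
    kahlerQuad R v x y y + kahlerQuad R x x w y = 0 := by
  have hre := hR.re_firstVariation_eq_zero hreal h0 horth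
  have him := hR.re_firstVariation_eq_zero hreal h0 horth'
  rw [kahlerQuad_smul_first, kahlerQuad_smul_third, ← mul_add, I_mul_re, neg_eq_zero] at him
  exact Complex.ext hre him

theorem apply_first_eq_zero (hR : HasNonnegOrthBisectional R)
    (hreal : ∀ i j k l, R i j k l = conj (R j i l k)) {a b μ : Fin n} (hab : a ≠ b)
    (h0 : R a a b b = 0) (hμ : μ ≠ b) : R μ a b b = 0 := by
  have := hR.firstVariation_eq_zero hreal (x := Pi.single a 1) (y := Pi.single b 1)
    (v := Pi.single μ 1) (w := Pi.single b 0) (by simpa [kahlerQuad_single] using h0)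
    (fun ε => by simp [hermInner, Pi.single_apply, hab.symm, hμ.symm])
    (fun ε => by simp [hermInner, Pi.single_apply, hab.symm, hμ.symm])
  simp only [kahlerQuad_single] at this
  simpa using this

theorem apply_third_eq_zero (hR : HasNonnegOrthBisectional R)
    (hreal : ∀ i j k l, R i j k l = conj (R j i l k)) {a b ν : Fin n} (hab : a ≠ b)
    (h0 : R a a b b = 0) (hν : ν ≠ a) : R a a ν b = 0 := by
  have := hR.firstVariation_eq_zero hreal (x := Pi.single a 1) (y := Pi.single b 1)
    (v := Pi.single a 0) (w := Pi.single ν 1) (by simpa [kahlerQuad_single] using h0)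
    (fun ε => by simp [hermInner, Pi.single_apply, hab, hν.symm])
    (fun ε => by simp [hermInner, Pi.single_apply, hab, hν.symm])
  simp only [kahlerQuad_single] at this
  simpa using this

/-- First variation along the rotations `(e_a + ε e_b, e_b - ε e_a)` and
`(e_a + iε e_b, e_b + iε e_a)` of the orthonormal pair. -/
theorem apply_eq_apply_of_rotation (hR : HasNonnegOrthBisectional R)
    (hreal : ∀ i j k l, R i j k l = conj (R j i l k)) {a b : Fin n} (hab : a ≠ b)
    (h0 : R a a b b = 0) : R b a b b = R a a b a := by
  have hre := hR.re_firstVariation_eq_zero hreal (x := Pi.single a 1) (y := Pi.single b 1)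
    (v := Pi.single b 1) (w := Pi.single a (-1)) (by simpa [kahlerQuad_single] using h0)
    (fun ε => by simp [hermInner, Pi.single_apply, add_mul, mul_add, sum_add_distrib, ite_mul,
      mul_ite, apply_ite (starRingEnd ℂ), hab, hab.symm])
  have him := hR.re_firstVariation_eq_zero hreal (x := Pi.single a 1) (y := Pi.single b 1)
    (v := Pi.single b I) (w := Pi.single a I) (by simpa [kahlerQuad_single] using h0)
    (fun ε => by simp [hermInner, Pi.single_apply, add_mul, mul_add, sum_add_distrib, ite_mul,
      mul_ite, apply_ite (starRingEnd ℂ), hab, hab.symm])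
  simp only [kahlerQuad_single] at hre him
  rw [hreal a a b a]
  apply Complex.ext <;> simp at hre him ⊢ <;> linarith

theorem sum_sum_eq_sum_sum_compl_pair (hR : HasNonnegOrthBisectional R)
    (hsym1 : ∀ i j k l, R i j k l = R k j i l) (hsym2 : ∀ i j k l, R i j k l = R i l k j)
    (hreal : ∀ i j k l, R i j k l = conj (R j i l k)) {a b : Fin n} (hab : a ≠ b)
    (h0 : R a a b b = 0) :
    ∑ μ, ∑ ν, (R a a μ ν * R ν μ b b - (‖R a μ b ν‖ : ℂ) ^ 2) =
      ∑ μ ∈ {a, b}ᶜ, ∑ ν ∈ {a, b}ᶜ, (R a a μ ν * R ν μ b b - (‖R a μ b ν‖ : ℂ) ^ 2) := by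
  have h0' : R b b a a = 0 := by rw [hsym1, hsym2]; exact h0
  have hfst {μ} (hμ : μ ≠ b) : R μ a b b = 0 := hR.apply_first_eq_zero hreal hab h0 hμ
  have hsnd {μ} (hμ : μ ≠ b) : R a μ b b = 0 := by rw [hreal, hfst hμ, map_zero]
  have hthird {ν} (hν : ν ≠ a) : R a a ν b = 0 := hR.apply_third_eq_zero hreal hab h0 hν
  have hfourth {ν} (hν : ν ≠ a) : R a a b ν = 0 := by rw [hreal, hthird hν, map_zero]
  have hfourth_swap {ν} (hν : ν ≠ b) : R b b a ν = 0 := by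
    rw [hreal, hR.apply_third_eq_zero hreal hab.symm h0' hν, map_zero]
  refine sum_sum_eq_sum_sum_compl_pair_of_cross hab _ (fun i hi => ?_) ?_
  · simp only [mem_compl, mem_insert, mem_singleton, not_or] at hi
    refine ⟨?_, ?_, ?_, ?_⟩
    · rw [hsnd hi.2, hsym2 a i b a, hfourth hi.1]; simp
    · rw [hthird hi.1, hsnd hi.2]; simp
    · rw [hfst hi.2, hfourth hi.1]; simp
    · rw [hfourth hi.1, hsym1 a b b i, hfourth_swap hi.2]; simp
  · have hrot := hR.apply_eq_apply_of_rotation hreal hab h0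
    rw [hsym2 a b b a, h0, hrot, hreal a b b b, hrot, hreal a a b a]
    simp only [← mul_conj', conj_conj]
    ring

end HasNonnegOrthBisectional

theorem GtenOBC_eq_sum_add_sum_norm_sq (R : Fin n → Fin n → Fin n → Fin n → ℂ)
    (hsym1 : ∀ i j k l, R i j k l = R k j i l) (hsym2 : ∀ i j k l, R i j k l = R i l k j)
    (hreal : ∀ i j k l, R i j k l = conj (R j i l k)) (a b : Fin n) :
    GtenOBC R a a b b = ∑ μ, ∑ ν, (R a a μ ν * R ν μ b b - (‖R a μ b ν‖ : ℂ) ^ 2) +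
      ∑ μ, ∑ ν, (‖R a b μ ν‖ : ℂ) ^ 2 := by
  simp only [GtenOBC, ← sum_add_distrib, ← mul_conj']
  refine sum_congr rfl fun μ _ => sum_congr rfl fun ν _ => ?_
  rw [hreal ν μ b a, hsym1 μ ν a b, hsym2 a ν μ b, hreal μ a ν b]
  ring

end KahlerCurvature

/-- (Claim 2.5 in the proof of the Cao–Hamilton theorem.)  Let `n ≥ 2` and
let `R` be an algebraic Kähler curvature tensor on `ℂⁿ` with nonnegative orthogonal
bisectional curvature such that `R_{11̄22̄} = 0`.  Then
`G_{11̄22̄} = Σ_{3 ≤ i,j ≤ n} R_{11̄ij̄} R_{jī22̄} − Σ_{3 ≤ i,j ≤ n} |R_{1ī2j̄}|²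
  + Σ_{1 ≤ μ,ν ≤ n} |R_{12̄μν̄}|²`
(here the `n`-dimensional indices `1, 2` correspond to `0, 1 : Fin n`, and the range
`3 ≤ i ≤ n` corresponds to `2 ≤ (i : ℕ)` for `i : Fin n`). -/
theorem G_eleven_twentytwo_formula
    (n : ℕ) (hn : 2 ≤ n) (R : Fin n → Fin n → Fin n → Fin n → ℂ)
    (hsym1 : ∀ i j k l, R i j k l = R k j i l)
    (hsym2 : ∀ i j k l, R i j k l = R i l k j)
    (hreal : ∀ i j k l, R i j k l = (starRingEnd ℂ) (R j i l k))
    (hnonneg : ∀ V W : Fin n → ℂ, hermInner V W = 0 → 0 ≤ kahlerQuad R V V W W)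
    (hzero : R ⟨0, by omega⟩ ⟨0, by omega⟩ ⟨1, by omega⟩ ⟨1, by omega⟩ = 0) :
    GtenOBC R ⟨0, by omega⟩ ⟨0, by omega⟩ ⟨1, by omega⟩ ⟨1, by omega⟩ =
      (∑ i ∈ Finset.univ.filter (fun i : Fin n => 2 ≤ (i : ℕ)),
        ∑ j ∈ Finset.univ.filter (fun j : Fin n => 2 ≤ (j : ℕ)),
          R ⟨0, by omega⟩ ⟨0, by omega⟩ i j * R j i ⟨1, by omega⟩ ⟨1, by omega⟩)
      - ((∑ i ∈ Finset.univ.filter (fun i : Fin n => 2 ≤ (i : ℕ)),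
          ∑ j ∈ Finset.univ.filter (fun j : Fin n => 2 ≤ (j : ℕ)),
            ‖R ⟨0, by omega⟩ i ⟨1, by omega⟩ j‖ ^ 2 : ℝ) : ℂ)
      + ((∑ μ : Fin n, ∑ ν : Fin n,
            ‖R ⟨0, by omega⟩ ⟨1, by omega⟩ μ ν‖ ^ 2 : ℝ) : ℂ) := by
  set a : Fin n := ⟨0, by omega⟩
  set b : Fin n := ⟨1, by omega⟩
  have hab : a ≠ b := by simp [a, b, Fin.ext_iff]
  have hfilter : Finset.univ.filter (fun i : Fin n => 2 ≤ (i : ℕ)) = {a, b}ᶜ := by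
    ext i
    simp only [Finset.mem_filter, Finset.mem_univ, true_and, Finset.mem_compl,
      Finset.mem_insert, Finset.mem_singleton, a, b, Fin.ext_iff]
    omega
  rw [KahlerCurvature.GtenOBC_eq_sum_add_sum_norm_sq R hsym1 hsym2 hreal,
    KahlerCurvature.HasNonnegOrthBisectional.sum_sum_eq_sum_sum_compl_pair hnonneg hsym1 hsym2
      hreal hab hzero, hfilter]
  push_cast
  simp only [Finset.sum_sub_distrib]
end

section
/- Let n ≥ 1 be a natural number, let κ > 0, r > 0, α > κ be real numbers, and let V: (0, r] → ℝ be a function. Suppose that (i) for every a ∈ (0, r], if V(a) ≤ 3ⁿ · V(a/2) then V(a) ≥ κ · aⁿ, and (ii) V(r/2^k)/(r/2^k)ⁿ → α as k → ∞. Then V(r) ≥ κ · rⁿ. -/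
/-!
Argue by contradiction. If `V r < κ rⁿ`, hypothesis (i) fails at `a = r`, so
`V(r/2) < 3⁻ⁿ V(r)`, and hence the scale-invariant ratio `V(a)/aⁿ` drops by the factor `(2/3)ⁿ`
from `r` to `r/2`; since `κ > 0`, it stays below `κ`
(also when it is negative). Iterating, `V(r/2^k)/(r/2^k)ⁿ < κ` for
every `k`, so the limit `α` is at most `κ`.
-/

theorem div_half_pow_lt_of_three_pow_mul_lt {n : ℕ} {a x y : ℝ} (ha : 0 < a)
    (hxy : 3 ^ n * y < x) : y / (a / 2) ^ n < (2 / 3) ^ n * (x / a ^ n) := by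
  rw [div_pow, div_pow, div_div_eq_mul_div, mul_div_assoc',
    div_lt_div_iff_of_pos_right (by positivity), div_mul_eq_mul_div, lt_div_iff₀ (by positivity)]
  calc y * 2 ^ n * 3 ^ n = 2 ^ n * (3 ^ n * y) := by ring
    _ < 2 ^ n * x := by gcongr

theorem volume_ratio_lt_of_doubling {n : ℕ} {κ r : ℝ} (hκ : 0 < κ) (hr : 0 < r) {V : ℝ → ℝ}
    (hdoubling : ∀ a : ℝ, 0 < a → a ≤ r → V a ≤ 3 ^ n * V (a / 2) → κ * a ^ n ≤ V a)
    (hVr : V r < κ * r ^ n) (k : ℕ) : V (r / 2 ^ k) / (r / 2 ^ k) ^ n < κ := by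
  induction k with
  | zero => simpa [div_lt_iff₀ (pow_pos hr n)] using hVr
  | succ k ih =>
    set a := r / 2 ^ k
    have ha : 0 < a := by positivity
    have har : a ≤ r := div_le_self hr.le (one_le_pow₀ one_le_two)
    have hVa : V a < κ * a ^ n := by rwa [div_lt_iff₀ (pow_pos ha n)] at ih
    have hhalving : 3 ^ n * V (a / 2) < V a :=
      lt_of_not_ge fun h => (hdoubling a ha har h).not_gt hVa
    have hcontract : (2 / 3 : ℝ) ^ n * (V a / a ^ n) < κ := by
      have hc : (2 / 3 : ℝ) ^ n ≤ 1 := pow_le_one₀ (by norm_num) (by norm_num)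
      rcases le_or_gt 0 (V a / a ^ n) with hpos | hneg
      · exact (mul_le_of_le_one_left hpos hc).trans_lt ih
      · exact (mul_nonpos_of_nonneg_of_nonpos (by positivity) hneg.le).trans_lt hκ
    rw [pow_succ, ← div_div]
    exact (div_half_pow_lt_of_three_pow_mul_lt ha hhalving).trans hcontract

theorem volume_noncollapsing_induction_general
    (n : ℕ) (κ r α : ℝ) (hκ : 0 < κ) (hr : 0 < r) (hα : κ < α)
    (V : ℝ → ℝ)
    (hdoubling : ∀ a : ℝ, 0 < a → a ≤ r → V a ≤ 3 ^ n * V (a / 2) → κ * a ^ n ≤ V a)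
    (hlimit : Filter.Tendsto (fun k : ℕ => V (r / 2 ^ k) / (r / 2 ^ k) ^ n)
      Filter.atTop (nhds α)) :
    κ * r ^ n ≤ V r := by
  by_contra! hVr
  have hratio k := (volume_ratio_lt_of_doubling hκ hr hdoubling hVr k).le
  exact hα.not_ge (le_of_tendsto' hlimit hratio)

/-- (The inductive volume-comparison argument of B.-L. Chen used in the
proof of the strong no local collapsing theorem.)  Let `n ≥ 1` be a natural number, let
`κ > 0`, `r > 0`, `α > κ` be real numbers, and let `V : (0, r] → ℝ` be a function.  Suppose
that (i) for every `a ∈ (0, r]`, if `V(a) ≤ 3ⁿ · V(a/2)` then `V(a) ≥ κ · aⁿ`, and (ii)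
`V(r/2^k)/(r/2^k)ⁿ → α` as `k → ∞`.  Then `V(r) ≥ κ · rⁿ`. -/
theorem volume_noncollapsing_induction
    (n : ℕ) (hn : 1 ≤ n) (κ r α : ℝ) (hκ : 0 < κ) (hr : 0 < r) (hα : κ < α)
    (V : ℝ → ℝ)
    (hdoubling : ∀ a : ℝ, 0 < a → a ≤ r → V a ≤ 3 ^ n * V (a / 2) → κ * a ^ n ≤ V a)
    (hlimit : Filter.Tendsto (fun k : ℕ => V (r / 2 ^ k) / (r / 2 ^ k) ^ n)
      Filter.atTop (nhds α)) :
    κ * r ^ n ≤ V r :=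
  volume_noncollapsing_induction_general n κ r α hκ hr hα V hdoubling hlimit
end
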